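/- arXiv:math/0307208 — 2 statements merged into one kernel-verified Lean document; each statement's English description precedes it below -/
import Mathlib

section
/- Let p be an odd prime. Then the only square root of p in the ring ℤ/2pℤ is p itself: for every m ∈ ZMod (2p), if m² = p then m = p. (Consequently the idempotent p in ZMod (2p) is not a Smarandache idempotent.) -/
/-!
Reduce modulo 2 and modulo p and conclude by the Chinese remainder theorem. Modulo 2 squaring is
the identity (Fermat), so m = m² = p; modulo p we get m² = 0, hence m = 0 = p.
-/

namespace ZMod

theorem eq_of_castHom_eq_of_castHom_eq {m n : ℕ} (hmn : m.Coprime n) {x y : ZMod (m * n)}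
    (hm : castHom (dvd_mul_right m n) (ZMod m) x = castHom (dvd_mul_right m n) (ZMod m) y)
    (hn : castHom (dvd_mul_left n m) (ZMod n) x = castHom (dvd_mul_left n m) (ZMod n) y) :
    x = y := by
  apply (chineseRemainder hmn).injective
  change (cast x : ZMod m × ZMod n) = cast y
  ext
  · simpa [Prod.fst_zmod_cast] using hm
  · simpa [Prod.snd_zmod_cast] using hn

theorem eq_natCast_of_pow_eq_natCast {q p : ℕ} [Fact q.Prime] [Fact p.Prime] (hqp : q.Coprime p)
    {x : ZMod (q * p)} (hx : x ^ q = p) : x = p := by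
  refine eq_of_castHom_eq_of_castHom_eq hqp ?_ ?_
  · have h := congrArg (castHom (dvd_mul_right q p) (ZMod q)) hx
    rwa [map_pow, pow_card] at h
  · have h := congrArg (castHom (dvd_mul_left p q) (ZMod p)) hx
    rw [map_pow] at h
    rw [map_natCast, natCast_self] at h ⊢
    exact pow_eq_zero_iff (Fact.out : q.Prime).ne_zero |>.mp h

end ZMod

theorem odd_prime_unique_sqrt_mod_two_mul (p : ℕ) (hp : p.Prime) (hodd : Odd p) :
    ∀ m : ZMod (2 * p), m ^ 2 = p → m = p := by
  have : Fact p.Prime := ⟨hp⟩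
  exact fun _ => ZMod.eq_natCast_of_pow_eq_natCast (Nat.coprime_two_left.mpr hodd)
end

section
/- Let R be a ring and a, b ∈ R such that a·b = b^γ·a for some natural number γ ≥ 1. Then a²·b = b·(b^(γ-1)·a)². (In particular, in a quasi commutative ring, for every pair a, b there exists s ∈ R with a²b = b·s².) -/
theorem sq_mul_eq_mul_sq_of_mul_eq_pow_succ_mul {M : Type*} [Monoid M] {a b : M} {k : ℕ}
    (h : a * b = b ^ (k + 1) * a) : a ^ 2 * b = b * (b ^ k * a) ^ 2 :=
  calc a ^ 2 * b = a * (a * b) := by rw [sq, mul_assoc]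
    _ = a * (b ^ (k + 1) * a) := by rw [h]
    _ = (a * b) * (b ^ k * a) := by rw [pow_succ']; simp only [mul_assoc]
    _ = b ^ (k + 1) * a * (b ^ k * a) := by rw [h]
    _ = b * (b ^ k * a) ^ 2 := by rw [pow_succ', sq]; simp only [mul_assoc]

theorem quasi_commutative_sq_identity {R : Type*} [Ring R]
    (a b : R) (γ : ℕ) (hγ : 1 ≤ γ) (h : a * b = b ^ γ * a) :
    a ^ 2 * b = b * (b ^ (γ - 1) * a) ^ 2 := by
  obtain ⟨k, rfl⟩ := Nat.exists_eq_add_of_le' hγ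
  exact sq_mul_eq_mul_sq_of_mul_eq_pow_succ_mul h
end
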